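/- arXiv:1702.04308 — 3 statements merged into one kernel-verified Lean document; each statement's English description precedes it below -/
import Mathlib

section
/- Let G = (V, E, s, r) be a countable directed graph and v ∈ V. The model TCK family (P^v, S^v) on H_{G,v} is irreducible: the only closed subspaces of H_{G,v} that are invariant under every operator P^v_w (w ∈ V), S^v_e (e ∈ E) and their adjoints are {0} and H_{G,v}. -/
noncomputable section

open scoped ENNReal InnerProductSpace ComplexOrder
open ContinuousLinearMap

attribute [local instance] Classical.propDecidable

namespace GraphPaper

/-! ### Positivity of operators (without completeness assumptions) -/

/-- A bounded operator on a complex inner product space is positive if all the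
inner products `⟪T x, x⟫` are nonnegative (this forces them to be real). -/
def IsPosOp {W : Type*} [NormedAddCommGroup W] [InnerProductSpace ℂ W]
    (T : W →L[ℂ] W) : Prop :=
  ∀ x : W, 0 ≤ (inner ℂ (T x) x : ℂ)

/-! ### Toeplitz-Cuntz-Krieger families -/

variable {V E : Type*}

variable {H : Type*} [NormedAddCommGroup H] [InnerProductSpace ℂ H] [CompleteSpace H]

/-- The Toeplitz-Cuntz-Krieger relations for a family of projections `P` indexed by
vertices and partial isometries `S` indexed by edges. -/
def IsTCK (s r : E → V) (P : V → H →L[ℂ] H) (S : E → H →L[ℂ] H) : Prop :=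
  (∀ v, adjoint (P v) = P v) ∧
  (∀ v, P v ∘L P v = P v) ∧
  (∀ v w, v ≠ w → P v ∘L P w = 0) ∧
  (∀ e, adjoint (S e) ∘L S e = P (s e)) ∧
  (∀ (v : V) (F : Finset E), (∀ e ∈ F, r e = v) →
    IsPosOp (P v - ∑ e ∈ F, S e ∘L adjoint (S e)))

/-- A TCK family is a full Cuntz-Krieger family if for every vertex `v` receiving at
least one edge, the (unconditionally convergent) sum `∑_{r(e) = v} S_e S_e* x` is `P_v x`. -/
def IsFullCK (s r : E → V) (P : V → H →L[ℂ] H) (S : E → H →L[ℂ] H) : Prop :=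
  ∀ v : V, (∃ e, r e = v) → ∀ x : H,
    HasSum (fun e : {e : E // r e = v} => S e.1 (adjoint (S e.1) x)) (P v x)

/-- A TCK family is a Cuntz-Krieger family if `∑_{r(e) = v} S_e S_e* = P_v` for every
vertex `v` receiving finitely many and at least one edge. -/
def IsCK (s r : E → V) (P : V → H →L[ℂ] H) (S : E → H →L[ℂ] H) : Prop :=
  IsTCK s r P S ∧
  ∀ (v : V) (hfin : {e : E | r e = v}.Finite), hfin.toFinset.Nonempty →
    ∑ e ∈ hfin.toFinset, S e ∘L adjoint (S e) = P v

/-- The generators of a TCK family, indexed by vertices and edges. -/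
def gen (P : V → H →L[ℂ] H) (S : E → H →L[ℂ] H) : V ⊕ E → H →L[ℂ] H :=
  Sum.elim P S

variable {K : Type*} [NormedAddCommGroup K] [InnerProductSpace ℂ K] [CompleteSpace K]

/-- `(Q, T)` on `K` dilates `(P, S)` on `H` via the isometry `W : H → K`:
compressions of arbitrary nonempty words in the generators agree. -/
def Dilates (P : V → H →L[ℂ] H) (S : E → H →L[ℂ] H)
    (Q : V → K →L[ℂ] K) (T : E → K →L[ℂ] K) (W : H →L[ℂ] K) : Prop :=
  (∀ x : H, ‖W x‖ = ‖x‖) ∧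
  ∀ l : List (V ⊕ E), l ≠ [] →
    adjoint W ∘L (l.map (gen Q T)).prod ∘L W = (l.map (gen P S)).prod

/-! ### Finite paths -/

/-- A finite path `λ = e_n ⋯ e_1` in the directed graph determined by the source and
range maps `s r : E → V`, together with a base vertex `src` which is the source of the
path.  The edges are listed as `[e_n, …, e_1]`, with the consecutive compatibility
`s (e_{i+1}) = r (e_i)`, and (when the path is nonempty) `s (e_1) = src`.
A path with no edges is the length-zero path at the vertex `src`. -/
structure GPath (s r : E → V) : Type _ where
  src : V
  edges : List E
  chain : edges.Chain' fun e f => s e = r f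
  src_eq : ∀ e ∈ edges.getLast?, s e = src

variable {s r : E → V}

/-- The range of a finite path. -/
def GPath.rng (p : GPath s r) : V := ((p.edges.head?).map r).getD p.src

theorem GPath.ext' {p q : GPath s r} (h1 : p.src = q.src) (h2 : p.edges = q.edges) :
    p = q := by
  cases p; cases q; simp_all

/-- The length-zero path at a vertex. -/
def GPath.nil (s r : E → V) (v : V) : GPath s r where
  src := v
  edges := []
  chain := List.isChain_nil
  src_eq := by simp

/-- The tail of a path (removing the first, i.e. last-applied, edge). -/
def GPath.tail (p : GPath s r) : GPath s r where
  src := p.src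
  edges := p.edges.tail
  chain := p.chain.tail
  src_eq := by
    intro f hf
    apply p.src_eq
    rcases hp : p.edges with - | ⟨a, t⟩
    · rw [hp] at hf; simp at hf
    · rw [hp] at hf
      rcases t with - | ⟨b, t'⟩
      · simp at hf
      · simpa [List.getLast?_cons_cons] using hf

/-- The operator `T_λ = T_{e_n} ⋯ T_{e_1}` associated to a finite path `λ`;
for the length-zero path at `v` it is `P_v`. -/
def pathOp (P : V → H →L[ℂ] H) (S : E → H →L[ℂ] H) (p : GPath s r) : H →L[ℂ] H :=
  if p.edges.isEmpty then P p.src else (p.edges.map S).prod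

/-- Paths with source `v`. -/
abbrev SPath (s r : E → V) (v : V) : Type _ := {p : GPath s r // p.src = v}

/-! ### The model space and the model TCK family -/

/-- The model Hilbert space `H_{G,v} = ℓ²` of the set of paths with source `v`. -/
abbrev HGv (s r : E → V) (v : V) : Type _ := lp (fun _ : SPath s r v => ℂ) 2

/-- The basis vector `ξ_λ` of the model space. -/
def xi {v : V} (p : SPath s r v) : HGv s r v := lp.single 2 p 1

/-- Pulling back a function `x : ι → ℂ` along a partially defined map `f`. -/
def pullFun {ι κ : Type*} (f : κ → Option ι) (x : ι → ℂ) (k : κ) : ℂ :=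
  ((f k).map x).getD 0

theorem pullFun_core {ι κ : Type*} (f : κ → Option ι)
    (hf : ∀ ⦃k k' : κ⦄ ⦃i : ι⦄, f k = some i → f k' = some i → k = k')
    (x : lp (fun _ : ι => ℂ) 2) :
    Memℓp (pullFun f ⇑x) 2 ∧
      ∑' k : κ, ‖pullFun f ⇑x k‖ ^ (2 : ℝ) ≤ ∑' i : ι, ‖x i‖ ^ (2 : ℝ) := by
  classical
  have hp : 0 < (2 : ℝ≥0∞).toReal := by norm_num
  have hx : Summable fun i : ι => ‖x i‖ ^ (2 : ℝ) := by
    have := lp.memℓp x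
    rw [memℓp_gen_iff hp] at this
    simpa using this
  set σ : Set κ := {k : κ | (f k).isSome} with hσ
  have hmem : ∀ k : σ, ∃ i, f (k : κ) = some i := fun k => Option.isSome_iff_exists.mp k.2
  set h : σ → ι := fun k => (f (k : κ)).get k.2 with hh
  have hfk : ∀ k : σ, f (k : κ) = some (h k) := fun k => (Option.some_get k.2).symm
  have hinj : Function.Injective h := by
    intro a b hab
    have ha := hfk a
    have hb := hfk b
    rw [hab] at ha
    exact Subtype.ext (hf ha hb)
  have hval : ∀ k : σ, pullFun f ⇑x (k : κ) = x (h k) := by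
    intro k
    simp [pullFun, hfk k]
  set g : κ → ℝ := fun k => ‖pullFun f ⇑x k‖ ^ (2 : ℝ) with hg
  have hsupp : Function.support g ⊆ σ := by
    intro k hk
    by_contra hks
    have : f k = none := by
      rw [hσ] at hks
      simpa [Option.isNone_iff_eq_none, Option.not_isSome_iff_eq_none] using hks
    apply hk
    simp [hg, pullFun, this, Real.zero_rpow (by norm_num : (2:ℝ) ≠ 0)]
  have hcomp : (g ∘ (Subtype.val : σ → κ)) = (fun i => ‖x i‖ ^ (2 : ℝ)) ∘ h := by
    funext k
    simp [hg, Function.comp, hval k]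
  have hsummσ : Summable (g ∘ (Subtype.val : σ → κ)) := by
    rw [hcomp]; exact hx.comp_injective hinj
  have hsumm : Summable g := by
    obtain ⟨a, ha⟩ := hsummσ
    exact ⟨a, (hasSum_subtype_iff_of_support_subset hsupp).mp ha⟩
  constructor
  · apply memℓp_gen
    have : (fun k => ‖pullFun f ⇑x k‖ ^ (2 : ℝ≥0∞).toReal) = g := by
      funext k; simp [hg]
    rw [this]
    exact hsumm
  · have h1 : ∑' k : κ, g k = ∑' k : σ, g k := (tsum_subtype_eq_of_support_subset hsupp).symm
    have h2 : ∑' k : σ, g k ≤ ∑' i : ι, ‖x i‖ ^ (2 : ℝ) := by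
      have := tsum_comp_le_tsum_of_inj hx
        (fun i => Real.rpow_nonneg (norm_nonneg _) _) hinj
      calc ∑' k : σ, g k = ∑' k : σ, ((fun i => ‖x i‖ ^ (2 : ℝ)) ∘ h) k := by
            rw [← hcomp]; rfl
        _ ≤ ∑' i : ι, ‖x i‖ ^ (2 : ℝ) := this
    exact h1.trans_le h2

/-- The bounded operator `lp² ι → lp² κ` induced by a partially defined injection. -/
def pullCLM {ι κ : Type*} (f : κ → Option ι)
    (hf : ∀ ⦃k k' : κ⦄ ⦃i : ι⦄, f k = some i → f k' = some i → k = k') :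
    lp (fun _ : ι => ℂ) 2 →L[ℂ] lp (fun _ : κ => ℂ) 2 :=
  LinearMap.mkContinuous
    { toFun := fun x => ⟨pullFun f ⇑x, (pullFun_core f hf x).1⟩
      map_add' := by
        intro x y
        apply lp.ext
        funext k
        show pullFun f ⇑(x + y) k = pullFun f ⇑x k + pullFun f ⇑y k
        rw [lp.coeFn_add]
        unfold pullFun
        cases f k <;> simp
      map_smul' := by
        intro c x
        apply lp.ext
        funext k
        show pullFun f ⇑(c • x) k = c • pullFun f ⇑x k
        rw [lp.coeFn_smul]
        unfold pullFun
        cases f k <;> simp }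
    1
    (by
      intro x
      have hp : 0 < (2 : ℝ≥0∞).toReal := by norm_num
      rw [one_mul]
      set y : lp (fun _ : κ => ℂ) 2 := ⟨pullFun f ⇑x, (pullFun_core f hf x).1⟩ with hy
      show ‖y‖ ≤ ‖x‖
      have hle := (pullFun_core f hf x).2
      have h1 : ‖y‖ ^ (2:ℝ) = ∑' k : κ, ‖pullFun f ⇑x k‖ ^ (2 : ℝ) := by
        simpa using lp.norm_rpow_eq_tsum hp y
      have h2 : ‖x‖ ^ (2:ℝ) = ∑' i : ι, ‖x i‖ ^ (2 : ℝ) := by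
        simpa using lp.norm_rpow_eq_tsum hp x
      have key : ‖y‖ ^ (2:ℝ) ≤ ‖x‖ ^ (2:ℝ) := by rw [h1, h2]; exact hle
      have k2 : ‖y‖ ^ (2:ℕ) ≤ ‖x‖ ^ (2:ℕ) := by
        rw [← Real.rpow_natCast ‖y‖ 2, ← Real.rpow_natCast ‖x‖ 2]
        exact_mod_cast key
      have hs := Real.sqrt_le_sqrt k2
      rwa [Real.sqrt_sq (norm_nonneg y), Real.sqrt_sq (norm_nonneg x)] at hs)

/-- Decoding map for the model projection at `w`. -/
def decodeP (v w : V) (p : SPath s r v) : Option (SPath s r v) :=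
  if p.1.rng = w then some p else none

/-- Decoding map for the model partial isometry at `e`. -/
def decodeS (v : V) (e : E) (p : SPath s r v) : Option (SPath s r v) :=
  if p.1.edges.head? = some e then some ⟨p.1.tail, p.2⟩ else none

theorem decodeP_inj (v w : V) :
    ∀ ⦃k k' : SPath s r v⦄ ⦃i : SPath s r v⦄,
      decodeP v w k = some i → decodeP v w k' = some i → k = k' := by
  intro k k' i h1 h2
  unfold decodeP at h1 h2
  split_ifs at h1 h2 <;> simp_all

theorem decodeS_inj (v : V) (e : E) :
    ∀ ⦃k k' : SPath s r v⦄ ⦃i : SPath s r v⦄,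
      decodeS v e k = some i → decodeS v e k' = some i → k = k' := by
  intro k k' i h1 h2
  unfold decodeS at h1 h2
  split_ifs at h1 h2 with he1 he2
  have hi1 := Option.some.inj h1
  have hi2 := Option.some.inj h2
  apply Subtype.ext
  apply GPath.ext'
  · rw [k.2, k'.2]
  · obtain ⟨t1, ht1⟩ := List.head?_eq_some_iff.mp he1
    obtain ⟨t2, ht2⟩ := List.head?_eq_some_iff.mp he2
    have e1 : k.1.tail.edges = t1 := by simp [GPath.tail, ht1]
    have e2 : k'.1.tail.edges = t2 := by simp [GPath.tail, ht2]
    have : k.1.tail.edges = k'.1.tail.edges := by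
      rw [show k.1.tail = i.1 from congrArg Subtype.val hi1,
        show k'.1.tail = i.1 from congrArg Subtype.val hi2]
    rw [ht1, ht2]
    rw [e1, e2] at this
    rw [this]

/-- The model projection `P^v_w` on `H_{G,v}`: the orthogonal projection onto the span
of the basis vectors `ξ_λ` with `r(λ) = w`. -/
def modelP (s r : E → V) (v w : V) : HGv s r v →L[ℂ] HGv s r v :=
  pullCLM (decodeP v w) (decodeP_inj v w)

/-- The model partial isometry `S^v_e` on `H_{G,v}`: it maps `ξ_λ` to `ξ_{eλ}`
when `s(e) = r(λ)`, and to `0` otherwise. -/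
def modelS (s r : E → V) (v : V) (e : E) : HGv s r v →L[ℂ] HGv s r v :=
  pullCLM (decodeS v e) (decodeS_inj v e)

/-! ### Reducing subspaces, wandering spaces, maximality -/

universe u

/-- A subspace is reducing for a family of operators if it is invariant under all of them
and all their adjoints. -/
def Reduces (Q : V → H →L[ℂ] H) (T : E → H →L[ℂ] H) (M : Submodule ℂ H) : Prop :=
  (∀ w : V, ∀ x ∈ M, Q w x ∈ M ∧ adjoint (Q w) x ∈ M) ∧
  (∀ e : E, ∀ x ∈ M, T e x ∈ M ∧ adjoint (T e) x ∈ M)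

/-- The wandering space `W_v = {x | Q_v x = x, T_e* x = 0 for all e ∈ r⁻¹(v)}`. -/
def wandering (s r : E → V) (Q : V → H →L[ℂ] H) (T : E → H →L[ℂ] H) (v : V) :
    Submodule ℂ H where
  carrier := {x : H | Q v x = x ∧ ∀ e : E, r e = v → adjoint (T e) x = 0}
  add_mem' := by
    intro a b ha hb
    refine ⟨?_, fun e he => ?_⟩
    · rw [map_add, ha.1, hb.1]
    · rw [map_add, ha.2 e he, hb.2 e he, add_zero]
  zero_mem' := ⟨map_zero _, fun e _ => map_zero _⟩
  smul_mem' := by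
    intro c x hx
    refine ⟨?_, fun e he => ?_⟩
    · rw [map_smul, hx.1]
    · rw [map_smul, hx.2 e he, smul_zero]

/-- The restriction of a TCK family to a reducing subspace `M` is a full Cuntz-Krieger
family (expressed via the action on vectors of `M` in the ambient space). -/
def IsFullCKOn (s r : E → V) (Q : V → H →L[ℂ] H) (T : E → H →L[ℂ] H)
    (M : Submodule ℂ H) : Prop :=
  ∀ v : V, (∃ e, r e = v) → ∀ x ∈ M,
    HasSum (fun e : {e : E // r e = v} => T e.1 (adjoint (T e.1) x)) (Q v x)

/-- A TCK family is maximal if for every TCK family dilating it, the range of the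
dilation isometry is reducing. -/
def IsMaxTCK {V E : Type*} (s r : E → V) {H : Type u} [NormedAddCommGroup H]
    [InnerProductSpace ℂ H] [CompleteSpace H]
    (P : V → H →L[ℂ] H) (S : E → H →L[ℂ] H) : Prop :=
  ∀ (K : Type u) [NormedAddCommGroup K] [InnerProductSpace ℂ K] [CompleteSpace K],
    ∀ (Q : V → K →L[ℂ] K) (T : E → K →L[ℂ] K) (W : H →L[ℂ] K),
      IsTCK s r Q T → Dilates P S Q T W →
        ∀ (g : V ⊕ E) (x : H),
          gen Q T g (W x) ∈ Set.range W ∧ adjoint (gen Q T g) (W x) ∈ Set.range W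

end GraphPaper

/-!
The subspace `K` reduces every `S_e`, so its orthogonal projection commutes with every `S_e*`.
The vacuum `ξ_v` is killed by all `S_e*`, hence so is its projection onto `K`; but a vector
killed by all `S_e*` vanishes off the trivial path, so the projection is `c ξ_v`. Thus `ξ_v`
lies in `K` (if `c ≠ 0`) or in `Kᗮ` (if `c = 0`). Both are closed and `S_e`-invariant, and the
`S_e` build every `ξ_λ` out of `ξ_v`, so whichever of them contains `ξ_v` is the whole space.
-/

section InvariantSubspace

variable {𝕜 H : Type*} [RCLike 𝕜] [NormedAddCommGroup H] [InnerProductSpace 𝕜 H]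

theorem Submodule.adjoint_apply_mem_orthogonal [CompleteSpace H] {K : Submodule 𝕜 H}
    {T : H →L[𝕜] H} (hT : ∀ x ∈ K, T x ∈ K) {y : H} (hy : y ∈ Kᗮ) :
    adjoint T y ∈ Kᗮ := fun x hx => by
  rw [adjoint_inner_right]
  exact hy (T x) (hT x hx)

theorem Submodule.starProjection_comm_of_invariant {K : Submodule 𝕜 H}
    [K.HasOrthogonalProjection] {A : H →L[𝕜] H} (hK : ∀ x ∈ K, A x ∈ K)
    (hKo : ∀ x ∈ Kᗮ, A x ∈ Kᗮ) (x : H) :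
    K.starProjection (A x) = A (K.starProjection x) :=
  K.eq_starProjection_of_mem_orthogonal (hK _ (K.starProjection_apply_mem x))
    (by rw [← map_sub]; exact hKo _ (K.sub_starProjection_mem_orthogonal x))

end InvariantSubspace

namespace GraphPaper

section ModelFamily

variable {V E : Type*} {s r : E → V} {v : V}

def GPath.cons (e : E) (p : GPath s r) (h : s e = p.rng) : GPath s r where
  src := p.src
  edges := e :: p.edges
  chain := by
    rcases hp : p.edges with - | ⟨f, t⟩
    · exact List.isChain_singleton _
    · refine List.isChain_cons_cons.mpr ⟨?_, hp ▸ p.chain⟩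
      rw [h]
      simp [GPath.rng, hp]
  src_eq := by
    intro f hf
    rcases hp : p.edges with - | ⟨a, t⟩
    · rw [hp] at hf
      obtain rfl : e = f := by simpa using hf
      rw [h]
      simp [GPath.rng, hp]
    · apply p.src_eq
      rw [hp] at hf ⊢
      simpa [List.getLast?_cons_cons] using hf

theorem GPath.s_eq_rng_tail (p : GPath s r) {e : E} (he : p.edges.head? = some e) :
    s e = p.tail.rng := by
  obtain ⟨t, ht⟩ := List.head?_eq_some_iff.mp he
  rcases t with - | ⟨f, t'⟩
  · have := p.src_eq e (by simp [ht])
    simp [GPath.tail, GPath.rng, ht, this]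
  · have hch := p.chain
    rw [ht] at hch
    simp [GPath.tail, GPath.rng, ht, (List.isChain_cons_cons.mp hch).1]

theorem GPath.eq_cons_iff {p q : GPath s r} {e : E} (h : s e = q.rng) :
    p = GPath.cons e q h ↔ p.edges.head? = some e ∧ p.tail = q := by
  constructor
  · rintro rfl
    exact ⟨rfl, GPath.ext' rfl rfl⟩
  · rintro ⟨he, rfl⟩
    obtain ⟨t, ht⟩ := List.head?_eq_some_iff.mp he
    exact GPath.ext' rfl (by simp [GPath.cons, GPath.tail, ht])

theorem SPath.cons_tail (p : SPath s r v) {e : E} (he : p.1.edges.head? = some e) :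
    (⟨GPath.cons e p.1.tail (p.1.s_eq_rng_tail he), p.2⟩ : SPath s r v) = p :=
  Subtype.ext ((GPath.eq_cons_iff (p.1.s_eq_rng_tail he)).mpr ⟨he, rfl⟩).symm

def nilp (s r : E → V) (v : V) : SPath s r v := ⟨GPath.nil s r v, rfl⟩

theorem eq_nilp_of_edges_eq_nil {p : SPath s r v} (hp : p.1.edges = []) :
    p = nilp s r v :=
  Subtype.ext (GPath.ext' p.2 hp)

theorem inner_xi_left (q : SPath s r v) (x : HGv s r v) : inner ℂ (xi q) x = x q := by
  simp [xi, lp.inner_single_left]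

theorem modelS_apply (e : E) (x : HGv s r v) (p : SPath s r v) :
    modelS s r v e x p = if p.1.edges.head? = some e then x ⟨p.1.tail, p.2⟩ else 0 := by
  show pullFun (decodeS v e) x p = _
  unfold pullFun decodeS
  split_ifs <;> rfl

theorem modelS_xi (e : E) (q : SPath s r v) (h : s e = q.1.rng) :
    modelS s r v e (xi q) = xi ⟨GPath.cons e q.1 h, q.2⟩ := by
  ext p
  simp only [modelS_apply, xi, lp.single_apply, Pi.single_apply, Subtype.ext_iff,
    GPath.eq_cons_iff h]
  split_ifs <;> simp_all

theorem adjoint_modelS_apply (e : E) (x : HGv s r v) (q : SPath s r v)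
    (h : s e = q.1.rng) :
    adjoint (modelS s r v e) x q = x ⟨GPath.cons e q.1 h, q.2⟩ := by
  rw [← inner_xi_left, adjoint_inner_right, modelS_xi e q h, inner_xi_left]

theorem adjoint_modelS_xi_nilp (e : E) : adjoint (modelS s r v e) (xi (nilp s r v)) = 0 := by
  -- `‖S_e* ξ_v‖² = (S_e S_e* ξ_v)(v)`, and the range of `S_e` misses the trivial path.
  rw [← inner_self_eq_zero (𝕜 := ℂ), adjoint_inner_left, inner_xi_left, modelS_apply, if_neg]
  simp [nilp, GPath.nil]

theorem eq_smul_xi_nilp_of_adjoint_modelS_eq_zero {z : HGv s r v}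
    (hz : ∀ e, adjoint (modelS s r v e) z = 0) : z = z (nilp s r v) • xi (nilp s r v) := by
  ext p
  by_cases hp : p.1.edges = []
  · obtain rfl := eq_nilp_of_edges_eq_nil hp
    simp [xi]
  obtain ⟨e, he⟩ := Option.ne_none_iff_exists'.mp (mt List.head?_eq_none_iff.mp hp)
  have hne : p ≠ nilp s r v := fun hnil => hp (by rw [hnil]; rfl)
  have hzp : z p = 0 := by
    rw [← SPath.cons_tail p he, ← adjoint_modelS_apply e z ⟨p.1.tail, p.2⟩, hz e]
    rfl
  simp [hzp, xi, hne]

theorem xi_mem_of_xi_nilp_mem {L : Submodule ℂ (HGv s r v)}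
    (hL : ∀ e, ∀ x ∈ L, modelS s r v e x ∈ L) (hnil : xi (nilp s r v) ∈ L)
    (p : SPath s r v) : xi p ∈ L := by
  suffices ∀ l : List E, ∀ p : SPath s r v, p.1.edges = l → xi p ∈ L from this _ p rfl
  intro l
  induction l with
  | nil => exact fun p hp => eq_nilp_of_edges_eq_nil hp ▸ hnil
  | cons e t ih =>
    intro p hp
    have he : p.1.edges.head? = some e := by simp [hp]
    rw [← SPath.cons_tail p he, ← modelS_xi e ⟨p.1.tail, p.2⟩]
    exact hL e _ (ih _ (by simp [GPath.tail, hp]))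

theorem eq_top_of_xi_nilp_mem {L : Submodule ℂ (HGv s r v)} (hLc : IsClosed (L : Set (HGv s r v)))
    (hL : ∀ e, ∀ x ∈ L, modelS s r v e x ∈ L) (hnil : xi (nilp s r v) ∈ L) : L = ⊤ := by
  have : CompleteSpace L := hLc.completeSpace_coe
  rw [← Submodule.orthogonal_eq_bot_iff, Submodule.eq_bot_iff]
  intro z hz
  ext q
  rw [← inner_xi_left]
  exact hz _ (xi_mem_of_xi_nilp_mem hL hnil q)

end ModelFamily

theorem statement_3_general {V E : Type*} (s r : E → V) (v : V)
    (K : Submodule ℂ (HGv s r v)) (hK : IsClosed (K : Set (HGv s r v)))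
    (hS : ∀ e : E, ∀ x ∈ K, modelS s r v e x ∈ K ∧
      ContinuousLinearMap.adjoint (modelS s r v e) x ∈ K) :
    K = ⊥ ∨ K = ⊤ := by
  have : CompleteSpace K := hK.completeSpace_coe
  have hKo (e : E) : ∀ x ∈ Kᗮ, modelS s r v e x ∈ Kᗮ := fun x hx => by
    simpa using K.adjoint_apply_mem_orthogonal (fun y hy => (hS e y hy).2) hx
  set z := K.starProjection (xi (nilp s r v))
  have hz : z = z (nilp s r v) • xi (nilp s r v) := by
    refine eq_smul_xi_nilp_of_adjoint_modelS_eq_zero fun e => ?_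
    rw [← K.starProjection_comm_of_invariant (fun x hx => (hS e x hx).2)
      (fun x hx => K.adjoint_apply_mem_orthogonal (fun y hy => (hS e y hy).1) hx),
      adjoint_modelS_xi_nilp, map_zero]
  rcases eq_or_ne (z (nilp s r v)) 0 with hc | hc
  · left
    have hnil : xi (nilp s r v) - z ∈ Kᗮ := K.sub_starProjection_mem_orthogonal _
    rw [hz, hc, zero_smul, sub_zero] at hnil
    rw [← Submodule.orthogonal_eq_top_iff]
    exact eq_top_of_xi_nilp_mem K.isClosed_orthogonal hKo hnil
  · right
    have hnil : z ∈ K := K.starProjection_apply_mem _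
    rw [hz, Submodule.smul_mem_iff K hc] at hnil
    exact eq_top_of_xi_nilp_mem hK (fun e x hx => (hS e x hx).1) hnil

/-- The model TCK family `(P^v, S^v)` on `H_{G,v}` is irreducible:
the only closed subspaces of `H_{G,v}` invariant under every `P^v_w`, `S^v_e` and their
adjoints are `{0}` and `H_{G,v}`. -/
theorem statement_3 {V E : Type*} [Countable V] [Countable E] (s r : E → V) (v : V)
    (K : Submodule ℂ (HGv s r v)) (hK : IsClosed (K : Set (HGv s r v)))
    (hP : ∀ w : V, ∀ x ∈ K, modelP s r v w x ∈ K ∧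
      ContinuousLinearMap.adjoint (modelP s r v w) x ∈ K)
    (hS : ∀ e : E, ∀ x ∈ K, modelS s r v e x ∈ K ∧
      ContinuousLinearMap.adjoint (modelS s r v e) x ∈ K) :
    K = ⊥ ∨ K = ⊤ :=
  statement_3_general s r v K hK hS

end GraphPaper
end
end

section
/- Let G = (V, E, s, r) be a countable directed graph and (Q, T) a TCK family for G on a complex Hilbert space H. Let v, w ∈ V and let ζ, η ∈ H satisfy Q_v ζ = ζ, T_e* ζ = 0 for every e ∈ r⁻¹(v), Q_w η = η, and T_e* η = 0 for every e ∈ r⁻¹(w). Let λ and μ be finite paths in G with s(λ) = v and s(μ) = w. If λ ≠ μ then ⟨T_λ ζ, T_μ η⟩ = 0; moreover ⟨T_λ ζ, T_λ η⟩ = ⟨ζ, η⟩. -/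
noncomputable section

open scoped ENNReal InnerProductSpace ComplexOrder
open ContinuousLinearMap

attribute [local instance] Classical.propDecidable

/-! The positivity of `Q_v - ∑_{e ∈ F} T_e T_e*` forces `T_e* = T_e* Q_{r(e)}` and
`T_e* T_f = 0` for `e ≠ f`; in particular a wandering vector at `v` is killed by every `T_e*`,
also when `r(e) ≠ v`. Hence each `T_λ` is a partial isometry with `T_λ* T_λ = Q_{s(λ)}`, which
gives the diagonal identity. For `λ ≠ μ`, cancel the common leading edges: either two distinct
edges `e ≠ f` meet in `T_e* T_f = 0`, or one path runs out and some `T_e*` hits a wandering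
vector, or both run out at distinct vertices whose projections are orthogonal. -/

namespace GraphPaper

theorem IsPosOp.sum_norm_sq_adjoint_apply_le {W ι : Type*} [NormedAddCommGroup W]
    [InnerProductSpace ℂ W] [CompleteSpace W] {P : W →L[ℂ] W} {S : ι → W →L[ℂ] W}
    {F : Finset ι} (hP : IsPosOp (P - ∑ i ∈ F, S i ∘L adjoint (S i))) (x : W) :
    ∑ i ∈ F, ‖adjoint (S i) x‖ ^ 2 ≤ RCLike.re ⟪P x, x⟫_ℂ := by
  have hx := (RCLike.nonneg_iff.mp (hP x)).1
  simp only [sub_apply, sum_apply, comp_apply, inner_sub_left, sum_inner, map_sub,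
    map_sum] at hx
  have hS : ∀ i, RCLike.re ⟪S i (adjoint (S i) x), x⟫_ℂ = ‖adjoint (S i) x‖ ^ 2 := by
    intro i
    rw [← adjoint_inner_right, inner_self_eq_norm_sq]
  simp only [hS] at hx
  linarith

namespace IsTCK

variable {V E H : Type*} [NormedAddCommGroup H] [InnerProductSpace ℂ H] [CompleteSpace H]
  {s r : E → V} {Q : V → H →L[ℂ] H} {T : E → H →L[ℂ] H}

theorem inner_Q_apply_left (h : IsTCK s r Q T) (v : V) (x y : H) :
    ⟪Q v x, y⟫_ℂ = ⟪x, Q v y⟫_ℂ := by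
  rw [← adjoint_inner_right, h.1]

theorem Q_apply_Q_apply (h : IsTCK s r Q T) (v : V) (x : H) : Q v (Q v x) = Q v x := by
  rw [← comp_apply, h.2.1]

theorem Q_apply_Q_apply_of_ne (h : IsTCK s r Q T) {v w : V} (hvw : v ≠ w) (x : H) :
    Q v (Q w x) = 0 := by
  rw [← comp_apply, h.2.2.1 v w hvw, zero_apply]

theorem re_inner_Q_apply_self (h : IsTCK s r Q T) (v : V) (x : H) :
    RCLike.re ⟪Q v x, x⟫_ℂ = ‖Q v x‖ ^ 2 := by
  rw [← h.Q_apply_Q_apply, h.inner_Q_apply_left, h.Q_apply_Q_apply,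
    inner_self_eq_norm_sq (𝕜 := ℂ)]

theorem adjoint_apply_apply (h : IsTCK s r Q T) (e : E) (x : H) :
    adjoint (T e) (T e x) = Q (s e) x := by
  rw [← comp_apply, h.2.2.2.1]

theorem norm_apply (h : IsTCK s r Q T) (e : E) (x : H) : ‖T e x‖ = ‖Q (s e) x‖ := by
  have hsq : ‖T e x‖ ^ 2 = ‖Q (s e) x‖ ^ 2 := by
    rw [← inner_self_eq_norm_sq (𝕜 := ℂ), ← adjoint_inner_left, h.adjoint_apply_apply,
      h.re_inner_Q_apply_self]
  exact (pow_left_inj₀ (norm_nonneg _) (norm_nonneg _) two_ne_zero).mp hsq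

theorem sum_norm_sq_adjoint_apply_le (h : IsTCK s r Q T) {v : V} {F : Finset E}
    (hF : ∀ e ∈ F, r e = v) (x : H) :
    ∑ e ∈ F, ‖adjoint (T e) x‖ ^ 2 ≤ ‖Q v x‖ ^ 2 :=
  h.re_inner_Q_apply_self v x ▸ (h.2.2.2.2 v F hF).sum_norm_sq_adjoint_apply_le x

theorem adjoint_apply_eq_zero (h : IsTCK s r Q T) {e : E} {x : H} (hx : Q (r e) x = 0) :
    adjoint (T e) x = 0 := by
  have hle := h.sum_norm_sq_adjoint_apply_le (F := {e}) (v := r e) (by simp) x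
  rw [Finset.sum_singleton, hx, norm_zero, zero_pow two_ne_zero, sq_nonpos_iff,
    norm_eq_zero] at hle
  exact hle

theorem adjoint_comp_Q_range (h : IsTCK s r Q T) (e : E) :
    adjoint (T e) ∘L Q (r e) = adjoint (T e) := by
  ext x
  have hker : adjoint (T e) (x - Q (r e) x) = 0 :=
    h.adjoint_apply_eq_zero (by rw [map_sub, h.Q_apply_Q_apply, sub_self])
  rw [map_sub, sub_eq_zero] at hker
  exact hker.symm

theorem Q_range_comp (h : IsTCK s r Q T) (e : E) : Q (r e) ∘L T e = T e := by
  simpa only [adjoint_comp, adjoint_adjoint, h.1] using congrArg adjoint (h.adjoint_comp_Q_range e)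

theorem comp_Q_source (h : IsTCK s r Q T) (e : E) : T e ∘L Q (s e) = T e := by
  ext x
  have hker : T e (x - Q (s e) x) = 0 := by
    rw [← norm_eq_zero, h.norm_apply, map_sub, h.Q_apply_Q_apply, sub_self, norm_zero]
  rw [map_sub, sub_eq_zero] at hker
  exact hker.symm

theorem adjoint_comp_of_ne (h : IsTCK s r Q T) {e f : E} (hef : e ≠ f) :
    adjoint (T e) ∘L T f = 0 := by
  by_cases hr : r e = r f
  · ext y
    -- `‖T_e* T_f y‖² + ‖T_f* T_f y‖² ≤ ‖T_f y‖²`, and the last two norms are both `‖Q_{s f} y‖`.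
    have hle := h.sum_norm_sq_adjoint_apply_le (F := {e, f}) (v := r f)
      (by simp [hr]) (T f y)
    rw [Finset.sum_pair hef, h.adjoint_apply_apply, ← comp_apply (Q _), h.Q_range_comp,
      h.norm_apply, add_le_iff_nonpos_left, sq_nonpos_iff, norm_eq_zero] at hle
    rw [comp_apply, zero_apply, hle]
  · rw [← h.adjoint_comp_Q_range, ← h.Q_range_comp f, comp_assoc, ← comp_assoc (Q _),
      h.2.2.1 _ _ hr, zero_comp, comp_zero]

theorem adjoint_apply_eq_zero_of_mem_wandering (h : IsTCK s r Q T) {v : V} {x : H}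
    (hx : x ∈ wandering s r Q T v) (e : E) : adjoint (T e) x = 0 := by
  by_cases hr : r e = v
  · exact hx.2 e hr
  · exact h.adjoint_apply_eq_zero (by rw [← hx.1, h.Q_apply_Q_apply_of_ne hr])

end IsTCK

namespace GPath

variable {V E : Type*} {s r : E → V}

theorem source_eq_rng_tail {p : GPath s r} {e : E} {l : List E} (hp : p.edges = e :: l) :
    s e = p.tail.rng := by
  have hc := p.chain
  have hsrc := p.src_eq
  rw [hp] at hc hsrc
  cases l with
  | nil => simpa [tail, rng, hp] using hsrc
  | cons f l => simpa [tail, rng, hp] using hc.rel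

theorem eq_of_tail_eq {p q : GPath s r} (hh : p.edges.head? = q.edges.head?)
    (ht : p.tail = q.tail) : p = q := by
  have hsrc : p.tail.src = q.tail.src := congrArg GPath.src ht
  have htl : p.tail.edges = q.tail.edges := congrArg GPath.edges ht
  refine GPath.ext' hsrc ?_
  simp only [tail] at htl
  cases hp : p.edges <;> cases hq : q.edges <;> simp_all

end GPath

section PathOperators

variable {V E H : Type*} [NormedAddCommGroup H] [InnerProductSpace ℂ H]
  {s r : E → V} {Q : V → H →L[ℂ] H} {T : E → H →L[ℂ] H}

theorem pathOp_of_edges_eq_nil {p : GPath s r} (hp : p.edges = []) : pathOp Q T p = Q p.src := by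
  simp [pathOp, hp]

variable [CompleteSpace H]

theorem IsTCK.pathOp_of_edges_eq_cons (h : IsTCK s r Q T) {p : GPath s r} {e : E}
    {l : List E} (hp : p.edges = e :: l) : pathOp Q T p = T e ∘L pathOp Q T p.tail := by
  cases l with
  | nil =>
    have hs : s e = p.src := by
      simpa [GPath.rng, GPath.tail, hp] using GPath.source_eq_rng_tail hp
    rw [pathOp_of_edges_eq_nil (p := p.tail) (by simp [GPath.tail, hp]),
      show p.tail.src = p.src from rfl, ← hs, h.comp_Q_source]
    simp [pathOp, hp]
  | cons f l => simp [pathOp, GPath.tail, hp, mul_def]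

theorem IsTCK.Q_rng_comp_pathOp (h : IsTCK s r Q T) (p : GPath s r) :
    Q p.rng ∘L pathOp Q T p = pathOp Q T p := by
  cases hp : p.edges with
  | nil =>
    have hrng : p.rng = p.src := by simp [GPath.rng, hp]
    rw [pathOp_of_edges_eq_nil hp, hrng, h.2.1]
  | cons e l =>
    have hrng : p.rng = r e := by simp [GPath.rng, hp]
    rw [h.pathOp_of_edges_eq_cons hp, hrng, ← comp_assoc, h.Q_range_comp]

theorem IsTCK.adjoint_pathOp_comp_pathOp (h : IsTCK s r Q T) (p : GPath s r) :
    adjoint (pathOp Q T p) ∘L pathOp Q T p = Q p.src := by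
  cases hp : p.edges with
  | nil => rw [pathOp_of_edges_eq_nil hp, h.1, h.2.1]
  | cons e l =>
    have ih := h.adjoint_pathOp_comp_pathOp p.tail
    rw [h.pathOp_of_edges_eq_cons hp, adjoint_comp, comp_assoc, ← comp_assoc (adjoint (T e)),
      h.2.2.2.1, GPath.source_eq_rng_tail hp, h.Q_rng_comp_pathOp, ih]
    rfl
termination_by p.edges.length
decreasing_by simp [GPath.tail, hp]

theorem IsTCK.inner_pathOp_eq_zero_of_ne (h : IsTCK s r Q T) {p q : GPath s r} (hpq : p ≠ q)
    {x y : H} (hx : x ∈ wandering s r Q T p.src) (hy : y ∈ wandering s r Q T q.src) :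
    ⟪pathOp Q T p x, pathOp Q T q y⟫_ℂ = 0 := by
  cases hp : p.edges with
  | nil =>
    rw [pathOp_of_edges_eq_nil hp, hx.1]
    cases hq : q.edges with
    | nil =>
      have hsrc : q.src ≠ p.src := fun hs => hpq (GPath.ext' hs.symm (hp.trans hq.symm))
      rw [pathOp_of_edges_eq_nil hq, ← h.inner_Q_apply_left, ← hx.1,
        h.Q_apply_Q_apply_of_ne hsrc, inner_zero_left]
    | cons f m =>
      rw [h.pathOp_of_edges_eq_cons hq, comp_apply, ← adjoint_inner_left,
        h.adjoint_apply_eq_zero_of_mem_wandering hx, inner_zero_left]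
  | cons e l =>
    rw [h.pathOp_of_edges_eq_cons hp, comp_apply]
    cases hq : q.edges with
    | nil =>
      rw [pathOp_of_edges_eq_nil hq, hy.1, ← adjoint_inner_right,
        h.adjoint_apply_eq_zero_of_mem_wandering hy, inner_zero_right]
    | cons f m =>
      rw [h.pathOp_of_edges_eq_cons hq, comp_apply, ← adjoint_inner_right,
        ← comp_apply (adjoint _)]
      by_cases hef : e = f
      · subst hef
        have htail : p.tail ≠ q.tail := fun ht => hpq (GPath.eq_of_tail_eq (by simp [hp, hq]) ht)
        rw [h.2.2.2.1, ← h.inner_Q_apply_left, GPath.source_eq_rng_tail hp, ← comp_apply (Q _),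
          h.Q_rng_comp_pathOp]
        exact h.inner_pathOp_eq_zero_of_ne htail hx hy
      · rw [h.adjoint_comp_of_ne hef, zero_apply, inner_zero_right]
termination_by p.edges.length
decreasing_by simp [GPath.tail, hp]

end PathOperators

theorem statement_5_general {V E : Type*}
    {H : Type*} [NormedAddCommGroup H] [InnerProductSpace ℂ H] [CompleteSpace H]
    (s r : E → V) (Q : V → H →L[ℂ] H) (T : E → H →L[ℂ] H) (hQT : IsTCK s r Q T)
    (v w : V) (ζ η : H)
    (hζ1 : Q v ζ = ζ) (hζ2 : ∀ e : E, r e = v → ContinuousLinearMap.adjoint (T e) ζ = 0)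
    (hη1 : Q w η = η) (hη2 : ∀ e : E, r e = w → ContinuousLinearMap.adjoint (T e) η = 0)
    (lam mu : GPath s r) (hlam : lam.src = v) (hmu : mu.src = w) :
    (lam ≠ mu → (inner ℂ (pathOp Q T lam ζ) (pathOp Q T mu η) : ℂ) = 0) ∧
      (inner ℂ (pathOp Q T lam ζ) (pathOp Q T lam η) : ℂ) = inner ℂ ζ η := by
  subst hlam hmu
  refine ⟨fun hne => hQT.inner_pathOp_eq_zero_of_ne hne ⟨hζ1, hζ2⟩ ⟨hη1, hη2⟩, ?_⟩
  rw [← adjoint_inner_right, ← comp_apply, hQT.adjoint_pathOp_comp_pathOp,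
    ← hQT.inner_Q_apply_left, hζ1]

/-- If `ζ` and `η` are wandering vectors at vertices `v` and `w` for a
TCK family `(Q, T)`, and `λ, μ` are finite paths with `s(λ) = v` and `s(μ) = w`, then
`⟨T_λ ζ, T_μ η⟩ = 0` whenever `λ ≠ μ`, and `⟨T_λ ζ, T_λ η⟩ = ⟨ζ, η⟩`. -/
theorem statement_5 {V E : Type*} [Countable V] [Countable E]
    {H : Type*} [NormedAddCommGroup H] [InnerProductSpace ℂ H] [CompleteSpace H]
    (s r : E → V) (Q : V → H →L[ℂ] H) (T : E → H →L[ℂ] H) (hQT : IsTCK s r Q T)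
    (v w : V) (ζ η : H)
    (hζ1 : Q v ζ = ζ) (hζ2 : ∀ e : E, r e = v → ContinuousLinearMap.adjoint (T e) ζ = 0)
    (hη1 : Q w η = η) (hη2 : ∀ e : E, r e = w → ContinuousLinearMap.adjoint (T e) η = 0)
    (lam mu : GPath s r) (hlam : lam.src = v) (hmu : mu.src = w) :
    (lam ≠ mu → (inner ℂ (pathOp Q T lam ζ) (pathOp Q T mu η) : ℂ) = 0) ∧
      (inner ℂ (pathOp Q T lam ζ) (pathOp Q T lam η) : ℂ) = inner ℂ ζ η :=
  statement_5_general s r Q T hQT v w ζ η hζ1 hζ2 hη1 hη2 lam mu hlam hmu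

end GraphPaper
end
end

section
/- Let I be an index set, V a countable type, and for each i ∈ I let G_i = (V, E_i, s_i, r_i) be a countable directed graph on the common vertex set V. Let (P, (S^{(i)})_{i ∈ I}) be an I-colored TCK family on a complex Hilbert space H. Then there exists a largest closed subspace K of H that is invariant under every P_v, S^{(i)}_e and their adjoints (reducing) and such that the restricted family (P|_K, (S^{(i)}|_K)) is a full CK I-colored family; that is, K (possibly {0}) has these properties, and every closed subspace L of H reducing for all the operators whose restricted family is a full CK I-colored family satisfies L ⊆ K. -/
/-!
For each colour `i` and vertex `v`, the vectors `x` with `∑_{r(e) = v} S_e S_e* x = P_v x`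
(unconditionally) form a linear subspace. It is closed: by the TCK relations every finite
partial sum `∑_{e ∈ F} S_e S_e*` lies between `0` and `P_v`, so has norm at most `1`, and the
set where an equicontinuous family converges to a continuous limit is closed. Reducing subspaces are likewise
stable under sums and closures, so the closed linear span of all closed reducing subspaces on
which the family is full CK is again one, and it contains every other.
-/

noncomputable section

open scoped ENNReal InnerProductSpace ComplexOrder
open ContinuousLinearMap

attribute [local instance] Classical.propDecidable

namespace GraphPaper

/-! ### Colored graphs -/

section Colored

universe uH

variable {I V : Type*} {E : I → Type*}
variable {H : Type*} [NormedAddCommGroup H] [InnerProductSpace ℂ H] [CompleteSpace H]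

/-- An `I`-colored TCK family: common vertex projections `P` together with, for each
color `i`, operators `S i` such that `(P, S i)` is a TCK family for the graph
`(V, E i, s i, r i)`. -/
def IsColTCK (s r : ∀ i, E i → V) (P : V → H →L[ℂ] H)
    (S : ∀ i, E i → H →L[ℂ] H) : Prop :=
  ∀ i, IsTCK (s i) (r i) P (S i)

/-- A full CK `I`-colored family. -/
def IsColFullCK (s r : ∀ i, E i → V) (P : V → H →L[ℂ] H)
    (S : ∀ i, E i → H →L[ℂ] H) : Prop :=
  ∀ i, IsFullCK (s i) (r i) P (S i)

/-- The generators of an `I`-colored family, indexed by vertices and colored edges. -/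
def cgen (P : V → H →L[ℂ] H) (S : ∀ i, E i → H →L[ℂ] H) :
    V ⊕ (Σ i, E i) → H →L[ℂ] H :=
  Sum.elim P fun p => S p.1 p.2

variable {K : Type*} [NormedAddCommGroup K] [InnerProductSpace ℂ K] [CompleteSpace K]

/-- `(Q, T)` on `K` dilates the `I`-colored family `(P, S)` on `H` via the isometry
`W : H → K`: compressions of arbitrary nonempty words in the generators agree. -/
def ColDilates (P : V → H →L[ℂ] H) (S : ∀ i, E i → H →L[ℂ] H)
    (Q : V → K →L[ℂ] K) (T : ∀ i, E i → K →L[ℂ] K) (W : H →L[ℂ] K) : Prop :=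
  (∀ x : H, ‖W x‖ = ‖x‖) ∧
  ∀ l : List (V ⊕ (Σ i, E i)), l ≠ [] →
    adjoint W ∘L (l.map (cgen Q T)).prod ∘L W = (l.map (cgen P S)).prod

/-- An `I`-colored TCK family is maximal if every `I`-colored TCK dilation of it has
reducing range. -/
def IsColMax (s r : ∀ i, E i → V) {H : Type uH} [NormedAddCommGroup H]
    [InnerProductSpace ℂ H] [CompleteSpace H]
    (P : V → H →L[ℂ] H) (S : ∀ i, E i → H →L[ℂ] H) : Prop :=
  ∀ (K : Type uH) [NormedAddCommGroup K] [InnerProductSpace ℂ K] [CompleteSpace K],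
    ∀ (Q : V → K →L[ℂ] K) (T : ∀ i, E i → K →L[ℂ] K) (W : H →L[ℂ] K),
      IsColTCK s r Q T → ColDilates P S Q T W →
        ∀ (g : V ⊕ (Σ i, E i)) (x : H),
          cgen Q T g (W x) ∈ Set.range W ∧ adjoint (cgen Q T g) (W x) ∈ Set.range W

end Colored

end GraphPaper

namespace GraphPaper

section Stmt16

variable {I V : Type*} {E : I → Type*}
variable {H : Type*} [NormedAddCommGroup H] [InnerProductSpace ℂ H] [CompleteSpace H]

/-- A subspace is reducing for an `I`-colored family if it is invariant under all the
operators and their adjoints. -/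
def ColReduces (P : V → H →L[ℂ] H) (S : ∀ i, E i → H →L[ℂ] H)
    (M : Submodule ℂ H) : Prop :=
  (∀ w : V, ∀ x ∈ M, P w x ∈ M ∧ adjoint (P w) x ∈ M) ∧
  (∀ (i) (e : E i), ∀ x ∈ M, S i e x ∈ M ∧ adjoint (S i e) x ∈ M)

/-- The restriction of an `I`-colored TCK family to a reducing subspace `M` is a full
CK `I`-colored family (expressed via the action on vectors of `M`). -/
def IsColFullCKOn (s r : ∀ i, E i → V) (P : V → H →L[ℂ] H)
    (S : ∀ i, E i → H →L[ℂ] H) (M : Submodule ℂ H) : Prop :=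
  ∀ (i) (v : V), (∃ e : E i, r i e = v) → ∀ x ∈ M,
    HasSum (fun e : {e : E i // r i e = v} => S i e.1 (adjoint (S i e.1) x)) (P v x)

end Stmt16

end GraphPaper

namespace Submodule

variable {R M : Type*} [Semiring R] [AddCommMonoid M] [Module R M]

theorem sSup_le_comap_sSup {f : M →ₗ[R] M} {𝒮 : Set (Submodule R M)}
    (h : ∀ L ∈ 𝒮, L ≤ L.comap f) : sSup 𝒮 ≤ (sSup 𝒮).comap f :=
  sSup_le fun L hL => (h L hL).trans (comap_mono (le_sSup hL))

theorem topologicalClosure_le_comap_topologicalClosure [TopologicalSpace M] [ContinuousAdd M]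
    [ContinuousConstSMul R M] {f : M →L[R] M} {L : Submodule R M}
    (h : L ≤ L.comap (f : M →ₗ[R] M)) :
    L.topologicalClosure ≤ L.topologicalClosure.comap (f : M →ₗ[R] M) :=
  topologicalClosure_minimal _ (h.trans (comap_mono L.le_topologicalClosure))
    (L.isClosed_topologicalClosure.preimage f.continuous)

end Submodule

namespace ContinuousLinearMap

section HasSumLocus

variable {R M N ι : Type*} [Semiring R] [AddCommMonoid M] [Module R M] [TopologicalSpace M]
  [AddCommMonoid N] [Module R N] [TopologicalSpace N] [ContinuousAdd N] [ContinuousConstSMul R N]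

def hasSumLocus (A : ι → M →L[R] N) (T : M →L[R] N) : Submodule R M where
  carrier := {x | HasSum (fun i => A i x) (T x)}
  add_mem' {x y} hx hy := by simpa only [Set.mem_ofPred_eq, map_add] using hx.add hy
  zero_mem' := by simpa only [Set.mem_ofPred_eq, map_zero] using hasSum_zero
  smul_mem' c x hx := by simpa only [Set.mem_ofPred_eq, map_smul] using hx.const_smul c

end HasSumLocus

theorem isClosed_hasSumLocus {𝕜 E F ι : Type*} [NontriviallyNormedField 𝕜]
    [SeminormedAddCommGroup E] [NormedSpace 𝕜 E] [SeminormedAddCommGroup F] [NormedSpace 𝕜 F]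
    (A : ι → E →L[𝕜] F) (T : E →L[𝕜] F) {C : ℝ}
    (hA : ∀ s : Finset ι, ‖∑ i ∈ s, A i‖ ≤ C) :
    IsClosed (hasSumLocus A T : Set E) := by
  have hLip (s : Finset ι) : LipschitzWith C.toNNReal fun x => ∑ i ∈ s, A i x := by
    simpa only [FunLike.coe_sum, Finset.sum_fn] using
      lipschitzWith_of_opNorm_le ((hA s).trans (Real.le_coe_toNNReal C))
  exact (LipschitzWith.uniformEquicontinuous _ _ hLip).equicontinuous.isClosed_setOfPred_tendsto
    T.continuous

end ContinuousLinearMap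

namespace GraphPaper

theorem IsPosOp.nonneg {H : Type*} [NormedAddCommGroup H] [InnerProductSpace ℂ H]
    {T : H →L[ℂ] H} (hT : IsPosOp T) : 0 ≤ T := by
  rw [ContinuousLinearMap.nonneg_iff_isPositive, ContinuousLinearMap.isPositive_iff]
  refine ⟨(T : H →ₗ[ℂ] H).isSymmetric_iff_inner_map_self_real.mpr fun x => ?_, hT⟩
  exact Complex.conj_eq_iff_im.mpr (Complex.nonneg_iff.mp (hT x)).2.symm

section

variable {V E H : Type*} [NormedAddCommGroup H] [InnerProductSpace ℂ H] [CompleteSpace H]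
  {s r : E → V} {P : V → H →L[ℂ] H} {S : E → H →L[ℂ] H}

theorem IsTCK.norm_sum_le_one (h : IsTCK s r P S) (v : V) (F : Finset {e // r e = v}) :
    ‖∑ e ∈ F, S e.1 ∘L adjoint (S e.1)‖ ≤ 1 := by
  obtain ⟨hsa, hid, -, -, hpos⟩ := h
  have hproj : IsStarProjection (P v) := ⟨hid v, (star_eq_adjoint (P v)).trans (hsa v)⟩
  set B := ∑ e ∈ F.map (Function.Embedding.subtype _), S e ∘L adjoint (S e)
  have hB : ∑ e ∈ F, S e.1 ∘L adjoint (S e.1) = B := by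
    simp only [B, Finset.sum_map, Function.Embedding.coe_subtype]
  have h0 : 0 ≤ B := Finset.sum_nonneg fun e _ => mul_star_self_nonneg (S e)
  have hle : B ≤ P v := sub_nonneg.mp (hpos v _ (by simp +contextual)).nonneg
  rw [hB]
  exact (CStarAlgebra.norm_le_norm_of_nonneg_of_le h0 hle).trans hproj.norm_le

end

section

variable {I V : Type*} {E : I → Type*}
  {H : Type*} [NormedAddCommGroup H] [InnerProductSpace ℂ H] [CompleteSpace H]
  {s r : ∀ i, E i → V} {P : V → H →L[ℂ] H} {S : ∀ i, E i → H →L[ℂ] H}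
  {𝒮 : Set (Submodule ℂ H)}

theorem ColReduces.topologicalClosure_sSup (h : ∀ L ∈ 𝒮, ColReduces P S L) :
    ColReduces P S (sSup 𝒮).topologicalClosure := by
  have hinv (T : H →L[ℂ] H) (hT : ∀ L ∈ 𝒮, ∀ x ∈ L, T x ∈ L) :
      ∀ x ∈ (sSup 𝒮).topologicalClosure, T x ∈ (sSup 𝒮).topologicalClosure :=
    Submodule.topologicalClosure_le_comap_topologicalClosure (Submodule.sSup_le_comap_sSup hT)
  refine ⟨fun w x hx => ⟨?_, ?_⟩, fun i e x hx => ⟨?_, ?_⟩⟩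
  · exact hinv _ (fun L hL y hy => ((h L hL).1 w y hy).1) x hx
  · exact hinv _ (fun L hL y hy => ((h L hL).1 w y hy).2) x hx
  · exact hinv _ (fun L hL y hy => ((h L hL).2 i e y hy).1) x hx
  · exact hinv _ (fun L hL y hy => ((h L hL).2 i e y hy).2) x hx

theorem IsColTCK.isColFullCKOn_topologicalClosure_sSup (hPS : IsColTCK s r P S)
    (h : ∀ L ∈ 𝒮, IsColFullCKOn s r P S L) :
    IsColFullCKOn s r P S (sSup 𝒮).topologicalClosure := by
  intro i v hv
  let A (e : {e // r i e = v}) : H →L[ℂ] H := S i e.1 ∘L adjoint (S i e.1)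
  have hclosed : IsClosed (ContinuousLinearMap.hasSumLocus A (P v) : Set H) :=
    ContinuousLinearMap.isClosed_hasSumLocus A (P v) ((hPS i).norm_sum_le_one v)
  exact Submodule.topologicalClosure_minimal _
    (sSup_le fun L hL x hx => h L hL i v hv x hx) hclosed

end

section

variable {I V : Type*} {E : I → Type*}
variable {H : Type*} [NormedAddCommGroup H] [InnerProductSpace ℂ H] [CompleteSpace H]

theorem statement_16_general
    (s r : ∀ i, E i → V)
    (P : V → H →L[ℂ] H) (S : ∀ i, E i → H →L[ℂ] H) (hPS : IsColTCK s r P S) :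
    ∃ K : Submodule ℂ H, IsClosed (K : Set H) ∧ ColReduces P S K ∧
      IsColFullCKOn s r P S K ∧
      ∀ L : Submodule ℂ H, IsClosed (L : Set H) → ColReduces P S L →
        IsColFullCKOn s r P S L → L ≤ K := by
  set 𝒮 : Set (Submodule ℂ H) :=
    {L | IsClosed (L : Set H) ∧ ColReduces P S L ∧ IsColFullCKOn s r P S L}
  refine ⟨(sSup 𝒮).topologicalClosure, (sSup 𝒮).isClosed_topologicalClosure,
    ColReduces.topologicalClosure_sSup fun L hL => hL.2.1,
    hPS.isColFullCKOn_topologicalClosure_sSup fun L hL => hL.2.2,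
    fun L hLc hLr hLf => (le_sSup (show L ∈ 𝒮 from ⟨hLc, hLr, hLf⟩)).trans
      (Submodule.le_topologicalClosure _)⟩

/-- For every `I`-colored TCK family there is a largest closed
reducing subspace on which the restricted family is a full CK `I`-colored family. -/
theorem statement_16 [Countable V] [∀ i, Countable (E i)]
    (s r : ∀ i, E i → V)
    (P : V → H →L[ℂ] H) (S : ∀ i, E i → H →L[ℂ] H) (hPS : IsColTCK s r P S) :
    ∃ K : Submodule ℂ H, IsClosed (K : Set H) ∧ ColReduces P S K ∧
      IsColFullCKOn s r P S K ∧
      ∀ L : Submodule ℂ H, IsClosed (L : Set H) → ColReduces P S L →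
        IsColFullCKOn s r P S L → L ≤ K :=
  statement_16_general s r P S hPS

end

end GraphPaper
end
end
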